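/- For every α ∈ (1, 2), the Takagi–Landsberg function f_α has exactly two global maximizers on [0,1], located at t = 1/3 and t = 2/3, and its maximum value is 1/(3(1 − α/2)). -/

import Mathlib

/-! Write `f = fTL α`. Then `f (1 - t) = f t`, and `f t = t + (α/2) f (2t)` on `[0, 1/2]`. If
`t ∈ [0, 1/2]` maximizes `f` on `[0, 1]` with value `M`, one unfolding gives
`t ≥ (1 - α/2) M ≥ (1 - α/2) f (1/3) = 1/3`; a second one, through `f (2t) = f (1 - 2t)`, gives
`(1 - α²/4) M ≤ (1 - α) t + α/2`, which for `α > 1` forces `t ≤ 1/3`. A maximizer exists by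
compactness, so `1/3` and, by symmetry, `2/3` are the only ones. The value
`f (1/3) = (1/3) Σ (α/2)^m` holds because every `2^m/3` lies at distance `1/3` from `ℤ`. -/

open MeasureTheory Filter Set

/-- The tent map: distance to the nearest integer. -/
noncomputable def phi (t : ℝ) : ℝ := ⨅ z : ℤ, |t - (z : ℝ)|

/-- A function in the Takagi class, for coefficient sequence `c`. -/
noncomputable def takagiF (c : ℕ → ℝ) (t : ℝ) : ℝ := ∑' m : ℕ, c m * phi (2 ^ m * t)

/-- `T(ρ) = Σ 2^{-(n+2)} (1 - ρ n)`. -/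
noncomputable def Trho (ρ : ℕ → ℝ) : ℝ := ∑' n : ℕ, (1 - ρ n) / 2 ^ (n + 2)

/-- A `{-1,+1}`-valued sequence. -/
def IsSign (ρ : ℕ → ℝ) : Prop := ∀ n, ρ n = 1 ∨ ρ n = -1

/-- `ρ` is a Rademacher expansion of `t`. -/
def IsRademacherExp (ρ : ℕ → ℝ) (t : ℝ) : Prop := IsSign ρ ∧ Trho ρ = t

/-- The step condition for coefficients `c`. -/
def StepCond (c : ℕ → ℝ) (ρ : ℕ → ℝ) : Prop :=
  ∀ n : ℕ, 1 ≤ n → ρ n * ∑ m ∈ Finset.range n, 2 ^ m * c m * ρ m ≤ 0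

noncomputable def sharpAux (c : ℕ → ℝ) : ℕ → ℝ × ℝ
  | 0 => (1, c 0)
  | n + 1 =>
    let S := (sharpAux c n).2
    let r : ℝ := if S ≤ 0 then 1 else -1
    (r, S + 2 ^ (n + 1) * c (n + 1) * r)

/-- The sequence `ρ♯` for coefficients `c`. -/
noncomputable def rhoSharp (c : ℕ → ℝ) (n : ℕ) : ℝ := (sharpAux c n).1

noncomputable def flatAux (c : ℕ → ℝ) : ℕ → ℝ × ℝ
  | 0 => (1, c 0)
  | n + 1 =>
    let S := (flatAux c n).2
    let r : ℝ := if S < 0 then 1 else -1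
    (r, S + 2 ^ (n + 1) * c (n + 1) * r)

/-- The sequence `ρ♭` for coefficients `c`. -/
noncomputable def rhoFlat (c : ℕ → ℝ) (n : ℕ) : ℝ := (flatAux c n).1

/-- The Takagi–Landsberg function with parameter `α`. -/
noncomputable def fTL (α : ℝ) (t : ℝ) : ℝ := ∑' m : ℕ, α ^ m / 2 ^ m * phi (2 ^ m * t)

noncomputable def sharpAuxTL (α : ℝ) : ℕ → ℝ × ℝ
  | 0 => (1, 1)
  | n + 1 =>
    let S := (sharpAuxTL α n).2
    let r : ℝ := if S ≤ 0 then 1 else -1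
    (r, S + α ^ (n + 1) * r)

/-- The sequence `ρ♯(α)` for the Takagi–Landsberg function. -/
noncomputable def rhoSharpTL (α : ℝ) (n : ℕ) : ℝ := (sharpAuxTL α n).1

noncomputable def flatAuxTL (α : ℝ) : ℕ → ℝ × ℝ
  | 0 => (1, 1)
  | n + 1 =>
    let S := (flatAuxTL α n).2
    let r : ℝ := if S < 0 then 1 else -1
    (r, S + α ^ (n + 1) * r)

/-- The sequence `ρ♭(α)` for the Takagi–Landsberg function. -/
noncomputable def rhoFlatTL (α : ℝ) (n : ℕ) : ℝ := (flatAuxTL α n).1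

/-- `τ♯(α) = T(ρ♯(α))`. -/
noncomputable def tauSharp (α : ℝ) : ℝ := Trho (rhoSharpTL α)

/-- `τ♭(α) = T(ρ♭(α))`. -/
noncomputable def tauFlat (α : ℝ) : ℝ := Trho (rhoFlatTL α)

/-- The Littlewood polynomial `p_{2n}(x) = 1 - x - x² - ⋯ - x^{2n}`. -/
noncomputable def p2n (n : ℕ) (x : ℝ) : ℝ := 1 - ∑ m ∈ Finset.Icc 1 (2 * n), x ^ m

lemma phi_le_abs_sub (t : ℝ) (z : ℤ) : phi t ≤ |t - z| :=
  ciInf_le ⟨0, by rintro _ ⟨z, rfl⟩; positivity⟩ z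

lemma phi_nonneg (t : ℝ) : 0 ≤ phi t := le_ciInf fun _ => abs_nonneg _

lemma phi_le_half (t : ℝ) : phi t ≤ 1 / 2 :=
  (phi_le_abs_sub t (round t)).trans (abs_sub_round t)

lemma phi_add_intCast (t : ℝ) (k : ℤ) : phi (t + k) = phi t :=
  (Equiv.subRight k).iInf_congr fun z => by
    simp only [Equiv.subRight_apply, Int.cast_sub]; ring_nf

lemma phi_intCast_sub (k : ℤ) (t : ℝ) : phi (k - t) = phi t :=
  (Equiv.subLeft k).iInf_congr fun z => by
    simp only [Equiv.subLeft_apply, Int.cast_sub]; rw [← abs_neg]; ring_nf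

lemma phi_eq_self_of_mem_Icc {t : ℝ} (ht : t ∈ Set.Icc 0 (1 / 2)) : phi t = t := by
  refine le_antisymm (by simpa [abs_of_nonneg ht.1] using phi_le_abs_sub t 0)
    (le_ciInf fun z => ?_)
  rcases le_or_gt z 0 with hz | hz
  · have : (z : ℝ) ≤ 0 := by exact_mod_cast hz
    exact (le_abs_self _).trans' (by linarith)
  · have : (1 : ℝ) ≤ z := by exact_mod_cast hz
    exact (neg_le_abs _).trans' (by linarith [ht.2])

lemma lipschitzWith_phi : LipschitzWith 1 phi :=
  LipschitzWith.of_le_add fun x y => by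
    rw [← sub_le_iff_le_add]
    refine le_ciInf fun z => ?_
    linarith [phi_le_abs_sub x z, abs_sub_le x y z, Real.dist_eq x y]

@[fun_prop]
lemma continuous_phi : Continuous phi := lipschitzWith_phi.continuous

lemma phi_two_pow_mul_third (m : ℕ) : phi (2 ^ m * (1 / 3)) = 1 / 3 := by
  have hthird : phi (1 / 3) = 1 / 3 := phi_eq_self_of_mem_Icc ⟨by norm_num, by norm_num⟩
  obtain ⟨k, hk | hk⟩ : ∃ k : ℤ, (2 : ℝ) ^ m * (1 / 3) = 1 / 3 + k ∨
      (2 : ℝ) ^ m * (1 / 3) = (k + 1 : ℤ) - 1 / 3 := by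
    induction m with
    | zero => exact ⟨0, Or.inl (by norm_num)⟩
    | succ m ih =>
      obtain ⟨k, hk | hk⟩ := ih
      · exact ⟨2 * k, Or.inr (by push_cast at hk ⊢; rw [pow_succ]; linarith)⟩
      · exact ⟨2 * k + 1, Or.inl (by push_cast at hk ⊢; rw [pow_succ]; linarith)⟩
  · rw [hk, phi_add_intCast, hthird]
  · rw [hk, phi_intCast_sub, hthird]

lemma norm_fTL_term_le (α : ℝ) (m : ℕ) (t : ℝ) :
    ‖α ^ m / 2 ^ m * phi (2 ^ m * t)‖ ≤ (|α| / 2) ^ m * (1 / 2) := by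
  rw [norm_mul, Real.norm_eq_abs, Real.norm_eq_abs, abs_of_nonneg (phi_nonneg _), ← div_pow,
    abs_pow, abs_div, abs_two]
  exact mul_le_mul_of_nonneg_left (phi_le_half _) (by positivity)

lemma fTL_one_sub (α t : ℝ) : fTL α (1 - t) = fTL α t :=
  tsum_congr fun m => by
    have h : (2 : ℝ) ^ m * (1 - t) = ((2 ^ m : ℤ) : ℝ) - 2 ^ m * t := by push_cast; ring
    rw [h, phi_intCast_sub]

section TakagiLandsberg

variable {α : ℝ}

lemma summable_abs_div_two_pow_mul_half (hα : |α| < 2) :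
    Summable fun m : ℕ => (|α| / 2) ^ m * (1 / 2) :=
  (summable_geometric_of_lt_one (by positivity) (by linarith)).mul_right _

lemma continuous_fTL (hα : |α| < 2) : Continuous (fTL α) :=
  continuous_tsum (fun m => by fun_prop)
    (summable_abs_div_two_pow_mul_half hα) (norm_fTL_term_le α)

lemma fTL_eq_phi_add (hα : |α| < 2) (t : ℝ) :
    fTL α t = phi t + α / 2 * fTL α (2 * t) := by
  have hsum := (summable_abs_div_two_pow_mul_half hα).of_norm_bounded (norm_fTL_term_le α · t)
  rw [fTL, hsum.tsum_eq_zero_add, fTL, ← tsum_mul_left]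
  congr 1
  · simp
  · refine tsum_congr fun m => ?_
    rw [pow_succ, pow_succ, mul_assoc _ 2 t]
    ring_nf

lemma fTL_third (hα : |α| < 2) : fTL α (1 / 3) = 1 / (3 * (1 - α / 2)) := by
  have hr : |α / 2| < 1 := by rw [abs_div, abs_two]; linarith
  have hterm (m : ℕ) : α ^ m / 2 ^ m * phi (2 ^ m * (1 / 3)) = 1 / 3 * (α / 2) ^ m := by
    rw [phi_two_pow_mul_third, div_pow]; ring
  rw [fTL, tsum_congr hterm, tsum_mul_left, tsum_geometric_of_abs_lt_one hr]
  field_simp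

lemma fTL_two_thirds (hα : |α| < 2) : fTL α (2 / 3) = 1 / (3 * (1 - α / 2)) := by
  rw [← fTL_third hα, ← fTL_one_sub]; norm_num

lemma fTL_eq_add_of_mem_Icc (hα : |α| < 2) {t : ℝ} (ht : t ∈ Set.Icc 0 (1 / 2)) :
    fTL α t = t + α / 2 * fTL α (2 * t) := by
  rw [fTL_eq_phi_add hα, phi_eq_self_of_mem_Icc ht]

lemma eq_third_of_isMaxOn_fTL (h1 : 1 < α) (h2 : α < 2) {t : ℝ} (ht : t ∈ Set.Icc 0 (1 / 2))
    (hmax : IsMaxOn (fTL α) (Set.Icc 0 1) t) : t = 1 / 3 := by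
  have hα : |α| < 2 := abs_lt.mpr ⟨by linarith, h2⟩
  have hle : ∀ s ∈ Set.Icc (0 : ℝ) 1, fTL α s ≤ fTL α t := isMaxOn_iff.mp hmax
  have hV : 1 ≤ 3 * (1 - α / 2) * fTL α t := by
    have h := hle (1 / 3) ⟨by norm_num, by norm_num⟩
    rw [fTL_third hα, div_le_iff₀ (by linarith)] at h
    linarith
  have hunfold₁ : fTL α t ≤ t + α / 2 * fTL α t :=
    calc fTL α t = t + α / 2 * fTL α (2 * t) := fTL_eq_add_of_mem_Icc hα ht
      _ ≤ t + α / 2 * fTL α t := by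
        gcongr
        exact hle _ ⟨by linarith [ht.1], by linarith [ht.2]⟩
  have hthird_le : 1 / 3 ≤ t := by linarith
  have hunfold₂ : fTL α t ≤ t + α / 2 * (1 - 2 * t) + (α / 2) ^ 2 * fTL α t :=
    calc fTL α t = t + α / 2 * fTL α (1 - 2 * t) := by
          rw [fTL_one_sub, fTL_eq_add_of_mem_Icc hα ht]
      _ = t + α / 2 * ((1 - 2 * t) + α / 2 * fTL α (2 * (1 - 2 * t))) := by
          rw [fTL_eq_add_of_mem_Icc hα ⟨by linarith [ht.2], by linarith⟩]
      _ ≤ t + α / 2 * ((1 - 2 * t) + α / 2 * fTL α t) := by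
          gcongr
          exact hle _ ⟨by linarith [ht.2], by linarith⟩
      _ = t + α / 2 * (1 - 2 * t) + (α / 2) ^ 2 * fTL α t := by ring
  nlinarith [mul_le_mul_of_nonneg_left hV (by linarith : (0 : ℝ) ≤ 1 + α / 2)]

lemma eq_third_or_two_thirds_of_isMaxOn_fTL (h1 : 1 < α) (h2 : α < 2) {t : ℝ}
    (ht : t ∈ Set.Icc 0 1) (hmax : IsMaxOn (fTL α) (Set.Icc 0 1) t) : t = 1 / 3 ∨ t = 2 / 3 := by
  rcases le_or_gt t (1 / 2) with h | h
  · exact Or.inl (eq_third_of_isMaxOn_fTL h1 h2 ⟨ht.1, h⟩ hmax)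
  · have hmax' : IsMaxOn (fTL α) (Set.Icc 0 1) (1 - t) :=
      isMaxOn_iff.mpr fun s hs => by rw [fTL_one_sub]; exact hmax hs
    have := eq_third_of_isMaxOn_fTL h1 h2 ⟨by linarith [ht.2], by linarith⟩ hmax'
    exact Or.inr (by linarith)

lemma isMaxOn_fTL_third (h1 : 1 < α) (h2 : α < 2) :
    IsMaxOn (fTL α) (Set.Icc 0 1) (1 / 3) := by
  have hα : |α| < 2 := abs_lt.mpr ⟨by linarith, h2⟩
  obtain ⟨t, ht, hmax⟩ := isCompact_Icc.exists_isMaxOn (Set.nonempty_Icc.mpr zero_le_one)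
    (continuous_fTL hα).continuousOn
  have hval : fTL α t = fTL α (1 / 3) := by
    rcases eq_third_or_two_thirds_of_isMaxOn_fTL h1 h2 ht hmax with rfl | rfl
    · rfl
    · rw [fTL_two_thirds hα, fTL_third hα]
  exact isMaxOn_iff.mpr fun s hs => hval ▸ hmax hs

end TakagiLandsberg

theorem takagi_landsberg_maximizers_alpha_gt_one
    (α : ℝ) (hα : α ∈ Set.Ioo (1 : ℝ) 2) :
    {t : ℝ | t ∈ Set.Icc (0 : ℝ) 1 ∧ ∀ s ∈ Set.Icc (0 : ℝ) 1, fTL α s ≤ fTL α t}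
      = {1 / 3, 2 / 3}
    ∧ IsGreatest (fTL α '' Set.Icc (0 : ℝ) 1) (1 / (3 * (1 - α / 2))) := by
  obtain ⟨h1, h2⟩ := hα
  have habs : |α| < 2 := abs_lt.mpr ⟨by linarith, h2⟩
  have hthird : IsMaxOn (fTL α) (Set.Icc 0 1) (1 / 3) := isMaxOn_fTL_third h1 h2
  have hmem_third : (1 / 3 : ℝ) ∈ Set.Icc 0 1 := ⟨by norm_num, by norm_num⟩
  have hmem_two_thirds : (2 / 3 : ℝ) ∈ Set.Icc 0 1 := ⟨by norm_num, by norm_num⟩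
  refine ⟨Set.ext fun t => ⟨fun ⟨ht, hmax⟩ => ?_, ?_⟩, ?_⟩
  · exact eq_third_or_two_thirds_of_isMaxOn_fTL h1 h2 ht (isMaxOn_iff.mpr hmax)
  · rintro (rfl | rfl)
    · exact ⟨hmem_third, isMaxOn_iff.mp hthird⟩
    · refine ⟨hmem_two_thirds, fun s hs => ?_⟩
      rw [fTL_two_thirds habs, ← fTL_third habs]
      exact hthird hs
  · refine ⟨⟨1 / 3, hmem_third, fTL_third habs⟩, ?_⟩
    rintro _ ⟨s, hs, rfl⟩
    rw [← fTL_third habs]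
    exact hthird hs
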